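/- Let A be an admissible sequence with S^n(A) = A (not necessarily of minimal period n), and suppose A is maximal. Let Ã be the period-n sequence obtained from A by flipping the symbol at every position congruent to n−1 modulo n. Then the minimal period of Ã is either n or n/2. -/

import Mathlib

/-!
Let `m` be the minimal period of `Ã`; it divides `n`, and `Ã` agrees with `A` before position
`n - 1`. Suppose `n = q m` with `q ≥ 3`. For every shift `k` with `m ∣ k` and `0 < k < n`, the
sequences `S^k A` and `A` first differ at `n - 1 - k`, and maximality of `A` then says that the
block of `Ã` before `d = n - 1 - k` is even iff `Ã_d = R`. For `k = n - m` this forces the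
period word of `Ã` to be odd; for `k = 2m` and `k = m` the blocks before `d` and `d + m` then
have opposite parities while `Ã_d = Ã_{d+m}`, a contradiction.
-/

/-- Admissible sequences are functions `ℕ → Bool`, with `false = L`, `true = R`.
`shiftSeq k A` is the `k`-fold shift `S^k A`. -/
def shiftSeq (k : ℕ) (A : ℕ → Bool) : ℕ → Bool := fun i => A (i + k)

/-- The block `A_0 ⋯ A_{n-1}` is even: it contains an even number of `R`'s. -/
def BlockEven (A : ℕ → Bool) (n : ℕ) : Prop :=
  Even ((Finset.range n).filter fun i => A i = true).card

/-- The order on admissible sequences: `A < B` iff at the first index `n` of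
disagreement, either `A_0 ⋯ A_{n-1}` is even and `A n = L < R = B n`, or it is
odd and `A n = R > L = B n`. -/
def SeqLT (A B : ℕ → Bool) : Prop :=
  ∃ n : ℕ, (∀ i < n, A i = B i) ∧ A n ≠ B n ∧
    ((BlockEven A n ∧ A n = false ∧ B n = true) ∨
     (¬ BlockEven A n ∧ A n = true ∧ B n = false))

def SeqLE (A B : ℕ → Bool) : Prop := SeqLT A B ∨ A = B

/-- `A` is maximal: `S^k A ≤ A` for all `k ≥ 0`. -/
def SeqMaximal (A : ℕ → Bool) : Prop := ∀ k : ℕ, SeqLE (shiftSeq k A) A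

/-- `A` is periodic of period `n > 0`. -/
def IsPeriodicSeq (A : ℕ → Bool) (n : ℕ) : Prop := 0 < n ∧ ∀ i, A (i + n) = A i

/-- The minimal period of `A` (and `0` if `A` is not periodic). -/
noncomputable def minPer (A : ℕ → Bool) : ℕ := sInf {n : ℕ | IsPeriodicSeq A n}

/-- Flip (`L ↔ R`) the symbol of `A` at every position congruent to `n - 1`
modulo `n`. -/
def flipAt (n : ℕ) (A : ℕ → Bool) : ℕ → Bool :=
  fun i => if i % n = n - 1 then !(A i) else A i

/-- The map `μ` on periodic admissible sequences: if `n` is the minimal period of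
`A` and `m` (with `0 ≤ m ≤ n-1`) is the unique integer such that `S^m A` is
maximal, then `μ A = S^{n-m} B`, where `B` is obtained from `S^m A` by flipping
the symbol at every position congruent to `n - 1` modulo `n`. -/
noncomputable def muSeq (A : ℕ → Bool) : ℕ → Bool :=
  shiftSeq (minPer A - sInf {m : ℕ | SeqMaximal (shiftSeq m A)})
    (flipAt (minPer A)
      (shiftSeq (sInf {m : ℕ | SeqMaximal (shiftSeq m A)}) A))

/-- The map `ν`: `ν A = μ A` if `per (μ A) = per A`, and `ν A = S^{per A / 2} A`
otherwise. -/
noncomputable def nuSeq (A : ℕ → Bool) : ℕ → Bool :=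
  if minPer (muSeq A) = minPer A then muSeq A else shiftSeq (minPer A / 2) A

open Function

theorem blockEven_congr {A B : ℕ → Bool} {d : ℕ} (h : ∀ i < d, A i = B i) :
    BlockEven A d ↔ BlockEven B d := by
  unfold BlockEven
  rw [Finset.filter_congr fun i hi => by rw [h i (Finset.mem_range.mp hi)]]

theorem blockEven_succ (A : ℕ → Bool) (d : ℕ) :
    BlockEven A (d + 1) ↔ (BlockEven A d ↔ A d = false) := by
  unfold BlockEven
  rw [Finset.range_add_one, Finset.filter_insert]
  split_ifs with hd
  · rw [Finset.card_insert_of_notMem (by simp), Nat.even_add_one, hd]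
    simp
  · simp_all

theorem Function.Periodic.blockEven_add {B : ℕ → Bool} {m : ℕ} (hB : Periodic B m) (d : ℕ) :
    BlockEven B (d + m) ↔ (BlockEven B d ↔ BlockEven B m) := by
  induction d with
  | zero => simp [BlockEven]
  | succ d ih =>
    rw [add_right_comm, blockEven_succ, ih, hB d, blockEven_succ]
    tauto

theorem SeqLE.blockEven_iff {A B : ℕ → Bool} {d : ℕ} (hle : SeqLE B A)
    (hagree : ∀ i < d, B i = A i) (hne : B d ≠ A d) :
    BlockEven A d ↔ A d = true := by
  rcases hle with ⟨j, hagree', hne', hcases⟩ | rfl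
  · obtain rfl : j = d := by
      by_contra hjd
      rcases Nat.lt_or_gt_of_ne hjd with h | h
      · exact hne' (hagree j h)
      · exact hne (hagree' d h)
    rw [← blockEven_congr hagree]
    rcases hcases with ⟨heven, -, hA⟩ | ⟨hodd, -, hA⟩
    · exact iff_of_true heven hA
    · exact iff_of_false hodd (by simp [hA])
  · exact absurd rfl hne

theorem flipAt_apply_of_add_one_lt (A : ℕ → Bool) {n i : ℕ} (h : i + 1 < n) :
    flipAt n A i = A i := by
  rw [flipAt, if_neg (by rw [Nat.mod_eq_of_lt (by omega)]; omega)]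

theorem flipAt_apply_of_add_one_eq (A : ℕ → Bool) {n i : ℕ} (h : i + 1 = n) :
    flipAt n A i = !A i := by
  rw [flipAt, if_pos (by rw [Nat.mod_eq_of_lt (by omega)]; omega)]

theorem Function.Periodic.flipAt {A : ℕ → Bool} {n : ℕ} (hA : Periodic A n) :
    Periodic (flipAt n A) n := fun i => by
  simp only [_root_.flipAt, Nat.add_mod_right, hA i]

theorem Function.Periodic.of_dvd {α : Type*} {f : ℕ → α} {m k : ℕ} (hf : Periodic f m)
    (hmk : m ∣ k) : Periodic f k := by
  obtain ⟨j, rfl⟩ := hmk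
  simpa only [Nat.cast_id, mul_comm] using hf.nat_mul j

theorem isPeriodicSeq_minPer {B : ℕ → Bool} {n : ℕ} (h : IsPeriodicSeq B n) :
    IsPeriodicSeq B (minPer B) :=
  Nat.sInf_mem (s := {n | IsPeriodicSeq B n}) ⟨n, h⟩

theorem minPer_le {B : ℕ → Bool} {n : ℕ} (h : IsPeriodicSeq B n) : minPer B ≤ n :=
  Nat.sInf_le h

theorem minPer_dvd {B : ℕ → Bool} {n : ℕ} (h : IsPeriodicSeq B n) : minPer B ∣ n := by
  obtain ⟨hm0, hm : Periodic B (minPer B)⟩ := isPeriodicSeq_minPer h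
  refine Nat.dvd_of_mod_eq_zero (by_contra fun hr => ?_)
  have hr_per : IsPeriodicSeq B (n % minPer B) := by
    refine ⟨Nat.pos_of_ne_zero hr, fun i => ?_⟩
    calc B (i + n % minPer B) = B (i + n % minPer B + n / minPer B * minPer B) :=
          (hm.of_dvd (dvd_mul_left _ _) _).symm
      _ = B (i + n) := by rw [add_assoc, Nat.mod_add_div']
      _ = B i := h.2 i
  exact (Nat.mod_lt n hm0).not_ge (minPer_le hr_per)

/-- `S^k A` and `A` first differ at `d = n - 1 - k`: before `n - 1` both agree with the
`k`-periodic `Ã`, and at `n - 1` only `A`'s symbol is flipped. -/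
theorem SeqMaximal.blockEven_flipAt_iff {A : ℕ → Bool} {n m k d : ℕ} (hmax : SeqMaximal A)
    (hB : Periodic (flipAt n A) m) (hmk : m ∣ k) (hk : 0 < k) (hdk : d + k + 1 = n) :
    BlockEven (flipAt n A) d ↔ flipAt n A d = true := by
  have hBk : Periodic (flipAt n A) k := hB.of_dvd hmk
  have hAB : ∀ i, i + 1 < n → A i = flipAt n A i := fun i hi =>
    (flipAt_apply_of_add_one_lt A hi).symm
  have hagree : ∀ i < d, shiftSeq k A i = A i := fun i hi => by
    rw [shiftSeq, hAB (i + k) (by omega), hBk i, ← hAB i (by omega)]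
  have hne : shiftSeq k A d ≠ A d := by
    have hlast : A (d + k) = !flipAt n A (d + k) := by
      rw [flipAt_apply_of_add_one_eq A (by omega), Bool.not_not]
    rw [shiftSeq, hlast, hBk d, ← hAB d (by omega)]
    cases A d <;> simp
  have key := (hmax k).blockEven_iff hagree hne
  rwa [blockEven_congr fun i hi => hAB i (by omega), hAB d (by omega)] at key

theorem SeqMaximal.not_periodic_flipAt {A : ℕ → Bool} {n m : ℕ} (hmax : SeqMaximal A)
    (hm : 0 < m) (hmn : m ∣ n) (h3 : 3 * m ≤ n) : ¬ Periodic (flipAt n A) m := by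
  intro hB
  obtain ⟨q, hq⟩ := hmn
  have hq3 : 3 ≤ q := Nat.le_of_mul_le_mul_left (by rw [← hq, mul_comm]; exact h3) hm
  obtain ⟨r, rfl⟩ : ∃ r, q = r + 3 := ⟨q - 3, by omega⟩
  obtain ⟨m', rfl⟩ : ∃ m', m = m' + 1 := ⟨m - 1, by omega⟩
  have hodd : ¬ BlockEven (flipAt n A) (m' + 1) := by
    have h := hmax.blockEven_flipAt_iff hB (dvd_mul_right _ (r + 2)) (by positivity)
      (d := m') (by rw [hq]; ring)
    rw [blockEven_succ, h]
    cases flipAt n A m' <;> simp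
  set d := (m' + 1) * r + m'
  have h2 := hmax.blockEven_flipAt_iff hB (dvd_mul_right _ 2) (by positivity) (d := d)
    (by rw [hq]; ring)
  have h1 := hmax.blockEven_flipAt_iff hB dvd_rfl (by positivity) (d := d + (m' + 1))
    (by rw [hq]; ring)
  rw [hB.blockEven_add, hB d, h2] at h1
  tauto

/-- Let `A` be a maximal admissible sequence with `S^n A = A` (not
necessarily of minimal period `n`), and let `Ã` be obtained from `A` by flipping
the symbol at every position congruent to `n - 1` modulo `n`.  Then the minimal
period of `Ã` is either `n` or `n/2`. -/
theorem stmt6 (A : ℕ → Bool) (n : ℕ) (hn : 0 < n) (hper : ∀ i, A (i + n) = A i)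
    (hmax : SeqMaximal A) :
    minPer (flipAt n A) = n ∨ 2 * minPer (flipAt n A) = n := by
  have hBn : IsPeriodicSeq (flipAt n A) n := ⟨hn, Periodic.flipAt hper⟩
  obtain ⟨hm, hB⟩ := isPeriodicSeq_minPer hBn
  obtain ⟨q, hq⟩ := minPer_dvd hBn
  match q, hq with
  | 0, hq => omega
  | 1, hq => left; omega
  | 2, hq => right; omega
  | r + 3, hq => exact absurd hB (hmax.not_periodic_flipAt hm ⟨r + 3, hq⟩ (by nlinarith))
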